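/- Let $w$ be a weight on $\mathbb{R}^n$ and $1 < p < \infty$. Then $w^{-1} \in A_p(w)$ (the weighted Muckenhoupt class with respect to the measure $w\,dx$) if and only if $w \in RH_{p'}$, where $p' = p/(p-1)$. -/

import Mathlib

open MeasureTheory Metric Set ENNReal

noncomputable section

abbrev Rn (n : ℕ) := EuclideanSpace ℝ (Fin n)

/-- The measure `w dx` on `ℝⁿ` given by a weight `w`. -/
def wMeas (n : ℕ) (w : Rn n → ℝ) : Measure (Rn n) :=
  volume.withDensity fun x => ENNReal.ofReal (w x)

/-- `u` belongs to the Muckenhoupt class `A_p` with respect to the measure `μ`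
(for `1 < p`), with constant `C`; note `1 - p' = -(p-1)⁻¹`. -/
def IsAp {n : ℕ} (μ : Measure (Rn n)) (u : Rn n → ℝ) (p C : ℝ) : Prop :=
  ∀ (x : Rn n) (ρ : ℝ), 0 < ρ →
    (⨍ y in ball x ρ, u y ∂μ) *
      (⨍ y in ball x ρ, u y ^ (-(p - 1)⁻¹) ∂μ) ^ (p - 1) ≤ C

/-- `u` belongs to the Muckenhoupt class `A_1` with respect to `μ`, with constant `C`. -/
def IsAone {n : ℕ} (μ : Measure (Rn n)) (u : Rn n → ℝ) (C : ℝ) : Prop :=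
  ∀ (x : Rn n) (ρ : ℝ), 0 < ρ →
    ∀ᵐ y ∂(μ.restrict (ball x ρ)), ⨍ z in ball x ρ, u z ∂μ ≤ C * u y

/-- `u ∈ A_p(μ)` with constant `C`, for `1 ≤ p`. -/
def IsMuck {n : ℕ} (μ : Measure (Rn n)) (u : Rn n → ℝ) (p C : ℝ) : Prop :=
  (p = 1 ∧ IsAone μ u C) ∨ (1 < p ∧ IsAp μ u p C)

/-- `u` belongs to the reverse Hölder class `RH_s` with respect to `μ`
(for `1 < s < ∞`), with constant `C`. -/
def IsRH {n : ℕ} (μ : Measure (Rn n)) (u : Rn n → ℝ) (s C : ℝ) : Prop :=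
  ∀ (x : Rn n) (ρ : ℝ), 0 < ρ →
    (⨍ y in ball x ρ, u y ^ s ∂μ) ^ s⁻¹ ≤ C * ⨍ y in ball x ρ, u y ∂μ

/-- `r_u(μ) = inf { p : u ∈ A_p(μ) }`. -/
def rIndex (n : ℕ) (μ : Measure (Rn n)) (u : Rn n → ℝ) : ℝ :=
  sInf {p : ℝ | ∃ C, IsMuck μ u p C}

/-- `s_u(μ) = inf { q : u ∈ RH_{q'}(μ) }`. -/
def sIndex (n : ℕ) (μ : Measure (Rn n)) (u : Rn n → ℝ) : ℝ :=
  sInf {q : ℝ | 1 ≤ q ∧ ∃ C, IsRH μ u (q / (q - 1)) C}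

end

/-!
Against the measure `w dx`, averages turn into ratios of Lebesgue averages:
`⨍_B g d(w dx) = (⨍_B w g) / ⨍_B w`. Hence `⨍_B w⁻¹ d(w dx) = (⨍_B w)⁻¹` and, since
`w · (w⁻¹)^(1 - p') = w^p'`, also `⨍_B (w⁻¹)^(1 - p') d(w dx) = (⨍_B w^p') / ⨍_B w`. The `A_p`
quantity of `w⁻¹` on `B` is then `(⨍_B w^p')^(p-1) / (⨍_B w)^p`, and raising the reverse Hölder
inequality `(⨍_B w^p')^(1/p') ≤ C ⨍_B w` to the power `p` shows that it is bounded by `C^p`.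
-/

lemma inv_mul_div_rpow_le_rpow_iff {p A I C : ℝ} (hp : 1 < p) (hA : 0 ≤ A) (hI : 0 ≤ I)
    (hAI : A = 0 → I = 0) (hC : 0 ≤ C) :
    A⁻¹ * (I / A) ^ (p - 1) ≤ C ^ p ↔ I ^ (p / (p - 1))⁻¹ ≤ C * A := by
  have hp0 : 0 < p := by linarith
  rcases hA.eq_or_lt with rfl | hA
  · have hq : (p / (p - 1))⁻¹ ≠ 0 := by
      have : 0 < p - 1 := by linarith
      positivity
    rw [hAI rfl, Real.zero_rpow hq]
    simp [Real.rpow_nonneg hC]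
  have lhs : A⁻¹ * (I / A) ^ (p - 1) = I ^ (p - 1) / A ^ p := by
    rw [Real.div_rpow hI hA.le, Real.rpow_sub_one hA.ne']
    field_simp
  have rhs : (I ^ (p / (p - 1))⁻¹) ^ p = I ^ (p - 1) := by
    rw [← Real.rpow_mul hI]
    congr 1
    field_simp
  rw [lhs, div_le_iff₀ (by positivity), ← Real.mul_rpow hC hA.le, ← rhs,
    Real.rpow_le_rpow_iff (by positivity) (by positivity) hp0]

section WithDensity

variable {α : Type*} [MeasurableSpace α] {μ : Measure α} {w : α → ℝ} {s : Set α}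

lemma setAverage_nonneg_of_nonneg (hw : ∀ x, 0 ≤ w x) : 0 ≤ ⨍ y in s, w y ∂μ := by
  rw [setAverage_eq]
  exact smul_nonneg (by positivity) (integral_nonneg hw)

lemma setAverage_withDensity_ofReal (hwm : Measurable w) (hw : ∀ x, 0 ≤ w x)
    (hs : MeasurableSet s) (hμs₀ : μ s ≠ 0) (hμs : μ s ≠ ∞) (g : α → ℝ) :
    ⨍ y in s, g y ∂μ.withDensity (fun x => ENNReal.ofReal (w x)) =
      (⨍ y in s, w y * g y ∂μ) / ⨍ y in s, w y ∂μ := by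
  have hmass : (μ.withDensity (fun x => ENNReal.ofReal (w x))).real s = ∫ y in s, w y ∂μ := by
    rw [measureReal_def, withDensity_apply _ hs, integral_eq_lintegral_of_nonneg_ae
      (Filter.Eventually.of_forall hw) hwm.aestronglyMeasurable]
  have hint : ∫ y in s, g y ∂μ.withDensity (fun x => ENNReal.ofReal (w x)) =
      ∫ y in s, w y * g y ∂μ := by
    rw [setIntegral_withDensity_eq_setIntegral_toReal_smul hwm.ennreal_ofReal
      (Filter.Eventually.of_forall fun _ => ofReal_lt_top) g hs]
    simp only [ENNReal.toReal_ofReal (hw _), smul_eq_mul]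
  have hμs' : μ.real s ≠ 0 := ENNReal.toReal_ne_zero.2 ⟨hμs₀, hμs⟩
  rw [setAverage_eq, setAverage_eq, setAverage_eq, hmass, hint, smul_eq_mul, smul_eq_mul,
    smul_eq_mul, mul_div_mul_left _ _ (inv_ne_zero hμs'), inv_mul_eq_div]

lemma integrableOn_of_integrableOn_rpow {q : ℝ} (hq : 1 ≤ q) (hμs : μ s ≠ ∞) (hw : ∀ x, 0 ≤ w x)
    (hwm : AEStronglyMeasurable w (μ.restrict s))
    (h : IntegrableOn (fun x => w x ^ q) s μ) : IntegrableOn w s μ := by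
  refine Integrable.mono' ((integrableOn_const (C := (1 : ℝ)) hμs (by simp)).add h) hwm
    (Filter.Eventually.of_forall fun x => ?_)
  rw [Real.norm_of_nonneg (hw x), Pi.add_apply]
  rcases le_total (w x) 1 with h1 | h1
  · linarith [Real.rpow_nonneg (hw x) q]
  · linarith [Real.self_le_rpow_of_one_le h1 hq]

/-- `⨍_s w = 0` can only be the junk value of a non-integrable `w`; then `w ^ q` is not integrable
either. -/
lemma setAverage_rpow_eq_zero_of_setAverage_eq_zero {q : ℝ} (hq : 1 ≤ q) (hwm : Measurable w)
    (hw : ∀ x, 0 < w x) (hμs₀ : μ s ≠ 0) (hμs : μ s ≠ ∞) (h : ⨍ y in s, w y ∂μ = 0) :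
    ⨍ y in s, w y ^ q ∂μ = 0 := by
  suffices ¬IntegrableOn (fun y => w y ^ q) s μ by
    rw [setAverage_eq, integral_undef this, smul_zero]
  intro hint
  have hpos : 0 < ∫ y in s, w y ∂μ := by
    rw [setIntegral_pos_iff_support_of_nonneg_ae (Filter.Eventually.of_forall fun x => (hw x).le)
      (integrableOn_of_integrableOn_rpow hq hμs (fun x => (hw x).le)
        hwm.aestronglyMeasurable.restrict hint),
      Function.support_eq_univ fun x => (hw x).ne', univ_inter]
    exact pos_iff_ne_zero.2 hμs₀
  rw [setAverage_eq, smul_eq_mul] at h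
  exact (mul_pos (inv_pos.2 (ENNReal.toReal_pos hμs₀ hμs)) hpos).ne' h

end WithDensity

section Weight

variable {n : ℕ} {w : Rn n → ℝ} {p : ℝ}

lemma setAverage_inv_wMeas (hwm : Measurable w) (hw : ∀ x, 0 < w x) (x : Rn n) {ρ : ℝ}
    (hρ : 0 < ρ) : ⨍ y in ball x ρ, (w y)⁻¹ ∂wMeas n w = (⨍ y in ball x ρ, w y)⁻¹ := by
  have hB₀ := (measure_ball_pos volume x hρ).ne'
  rw [wMeas, setAverage_withDensity_ofReal hwm (fun y => (hw y).le) measurableSet_ball hB₀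
    measure_ball_lt_top.ne]
  simp_rw [mul_inv_cancel₀ (hw _).ne']
  rw [setAverage_const hB₀ measure_ball_lt_top.ne, one_div]

lemma setAverage_inv_rpow_wMeas (hp : 1 < p) (hwm : Measurable w) (hw : ∀ x, 0 < w x)
    (x : Rn n) {ρ : ℝ} (hρ : 0 < ρ) :
    ⨍ y in ball x ρ, (w y)⁻¹ ^ (-(p - 1)⁻¹) ∂wMeas n w =
      (⨍ y in ball x ρ, w y ^ (p / (p - 1))) / ⨍ y in ball x ρ, w y := by
  have hp₁ : 0 < p - 1 := by linarith
  have hpow (y : Rn n) : w y * (w y)⁻¹ ^ (-(p - 1)⁻¹) = w y ^ (p / (p - 1)) := by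
    rw [Real.rpow_neg (inv_nonneg.2 (hw y).le), Real.inv_rpow (hw y).le, inv_inv,
      ← Real.rpow_one_add' (hw y).le (by positivity)]
    congr 1
    field_simp
    ring
  rw [wMeas, setAverage_withDensity_ofReal hwm (fun y => (hw y).le) measurableSet_ball
    (measure_ball_pos volume x hρ).ne' measure_ball_lt_top.ne]
  simp_rw [hpow]

lemma inv_ap_ball_le_rpow_iff_rh_ball_le (hp : 1 < p) (hwm : Measurable w)
    (hw : ∀ x, 0 < w x) {C : ℝ} (hC : 0 ≤ C) (x : Rn n) {ρ : ℝ} (hρ : 0 < ρ) :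
    (⨍ y in ball x ρ, (w y)⁻¹ ∂wMeas n w) *
        (⨍ y in ball x ρ, (w y)⁻¹ ^ (-(p - 1)⁻¹) ∂wMeas n w) ^ (p - 1) ≤ C ^ p ↔
      (⨍ y in ball x ρ, w y ^ (p / (p - 1))) ^ (p / (p - 1))⁻¹ ≤ C * ⨍ y in ball x ρ, w y := by
  have hq : 1 ≤ p / (p - 1) := (one_le_div (by linarith)).2 (by linarith)
  rw [setAverage_inv_wMeas hwm hw x hρ, setAverage_inv_rpow_wMeas hp hwm hw x hρ]
  exact inv_mul_div_rpow_le_rpow_iff hp (setAverage_nonneg_of_nonneg fun y => (hw y).le)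
    (setAverage_nonneg_of_nonneg fun y => Real.rpow_nonneg (hw y).le _)
    (setAverage_rpow_eq_zero_of_setAverage_eq_zero hq hwm hw
      (measure_ball_pos volume x hρ).ne' measure_ball_lt_top.ne) hC

end Weight

/-- `w⁻¹ ∈ A_p(w)` if and only if `w ∈ RH_{p'}`, `p' = p/(p-1)`. -/
theorem inv_in_Ap_iff_RH (n : ℕ) (p : ℝ) (hp : 1 < p)
    (w : Rn n → ℝ) (hw0 : ∀ x, 0 < w x) (hwm : Measurable w) :
    (∃ C, IsAp (wMeas n w) (fun x => (w x)⁻¹) p C) ↔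
      (∃ C, IsRH (volume : Measure (Rn n)) w (p / (p - 1)) C) := by
  constructor
  · rintro ⟨C, hC⟩
    refine ⟨(max C 0) ^ p⁻¹, fun x ρ hρ => ?_⟩
    rw [← inv_ap_ball_le_rpow_iff_rh_ball_le hp hwm hw0 (by positivity) x hρ,
      Real.rpow_inv_rpow (le_max_right C 0) (by linarith)]
    exact (hC x ρ hρ).trans (le_max_left C 0)
  · rintro ⟨C, hC⟩
    refine ⟨(max C 0) ^ p, fun x ρ hρ =>
      (inv_ap_ball_le_rpow_iff_rh_ball_le hp hwm hw0 (le_max_right C 0) x hρ).2 ?_⟩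
    exact (hC x ρ hρ).trans <| mul_le_mul_of_nonneg_right (le_max_left C 0)
      (setAverage_nonneg_of_nonneg fun y => (hw0 y).le)
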